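/- arXiv:math/0407280 — 7 statements merged into one kernel-verified Lean document; each statement's English description precedes it below -/
import Mathlib

section
/- For all n ≥ 1, the sequence a defined by a_0 = 1, a_{2n+1} = Σ_{i=0}^{n} a_{2i}·a_{2n-2i}, and a_{2n} = Σ_{i=0}^{2n-1} a_i·a_{2n-1-i} satisfies a_{2n} = (2^n/(2n+1))·C(3n, n). -/
/-!
Write `E = ∑ a₂ₙ xⁿ` and `O = ∑ a₂ₙ₊₁ xⁿ`. The recursions say `O = E²` and `E = 1 + 2x·E·O`, so
`E(x/2)` is the series `B = 1 + x·B³` of ternary trees. The coefficients of `Bʳ` are the Raney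
numbers `r/(3n+r)·C(3n+r, n)`; their convolution law `Bʳ·Bˢ = Bʳ⁺ˢ` follows by induction from
`Bʳ⁺¹ = Bʳ + x·Bʳ⁺³`. Hence `2ⁿ·[xⁿ]B` and `2ⁿ·[xⁿ]B²` satisfy the recursions, which determine
the sequence.
-/

open Finset

-- The coefficient of `xⁿ` in `Bʳ`, where `B = 1 + x·Bᵖ`. The `n = 0` branch matters only for
-- `r = 0`, where the formula would give `0 / 0 = 0`.
def raney (p r n : ℕ) : ℚ :=
  if n = 0 then 1 else r * (p * n + r).choose n / (p * n + r : ℕ)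

namespace raney

variable (p : ℕ)

@[simp]
theorem zero_right (r : ℕ) : raney p r 0 = 1 := rfl

theorem zero_left {n : ℕ} (hn : n ≠ 0) : raney p 0 n = 0 := by
  simp [raney, hn]

theorem eq_of_pos {r : ℕ} (hr : 0 < r) (n : ℕ) :
    raney p r n = r * (p * n + r).choose n / (p * n + r : ℕ) := by
  rcases n with _ | n
  · simp [raney, hr.ne']
  · simp [raney]

theorem succ_one (n : ℕ) : raney (p + 1) 1 n = ((p + 1) * n).choose n / (p * n + 1 : ℕ) := by
  have h := Nat.choose_mul_succ_eq ((p + 1) * n) n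
  rw [show (p + 1) * n + 1 - n = p * n + 1 by rw [add_mul, one_mul]; omega] at h
  rw [eq_of_pos _ one_pos, Nat.cast_one, one_mul, div_eq_div_iff (by positivity) (by positivity)]
  exact_mod_cast h.symm

-- Coefficientwise, `Bʳ⁺¹ = Bʳ·(1 + x·Bᵖ)`.
theorem succ_succ (r n : ℕ) : raney p (r + 1) (n + 1) = raney p r (n + 1) + raney p (r + p) n := by
  rcases Nat.eq_zero_or_pos (p + r) with h | h
  · obtain ⟨rfl, rfl⟩ : p = 0 ∧ r = 0 := by omega
    rcases n with _ | n <;> simp [raney, Nat.choose_eq_zero_of_lt]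
  have e1 : p * (n + 1) + (r + 1) = p * (n + 1) + r + 1 := by ring
  have e2 : p * n + (r + p) = p * (n + 1) + r := by ring
  rw [eq_of_pos p r.succ_pos, eq_of_pos p (by omega : 0 < r + p), e1, e2]
  simp only [raney, Nat.succ_ne_zero, if_false]
  set N := p * (n + 1) + r with hN
  have pascal : ((N + 1).choose (n + 1) : ℚ) = N.choose n + N.choose (n + 1) := by
    exact_mod_cast Nat.choose_succ_succ N n
  have absorb : ((N + 1) * N.choose n : ℚ) = (N + 1).choose (n + 1) * (n + 1) := by
    exact_mod_cast Nat.add_one_mul_choose_eq N n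
  have hN0 : (N : ℚ) ≠ 0 := by
    have : p ≤ p * (n + 1) := Nat.le_mul_of_pos_right _ n.succ_pos
    exact Nat.cast_ne_zero.mpr (by omega)
  have hNq : (N : ℚ) = p * (n + 1) + r := by rw [hN]; push_cast; ring
  push_cast
  field_simp
  refine mul_right_cancel₀ (n.cast_add_one_ne_zero : (n + 1 : ℚ) ≠ 0) ?_
  linear_combination ((N + 1) * (n + 1) * r : ℚ) * pascal - ((n + 1) * p : ℚ) * absorb
    + ((N + 1).choose (n + 1) * (n + 1) : ℚ) * hNq

theorem sum_antidiagonal_mul (r n s : ℕ) :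
    ∑ x ∈ antidiagonal n, raney p r x.1 * raney p s x.2 = raney p (r + s) n := by
  induction n generalizing s with
  | zero => simp
  | succ n ih =>
    induction s with
    | zero =>
      rw [Nat.sum_antidiagonal_succ']
      simp [zero_left]
    | succ s ihs =>
      rw [Nat.sum_antidiagonal_succ'] at ihs ⊢
      simp only [succ_succ, mul_add, sum_add_distrib, ih, zero_right, mul_one] at ihs ⊢
      rw [← add_assoc, ihs, ← add_assoc r s 1, succ_succ, add_assoc r s p]

theorem sum_range_mul (r s n : ℕ) :
    ∑ i ∈ range (n + 1), raney p r i * raney p s (n - i) = raney p (r + s) n := by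
  rw [← Nat.sum_antidiagonal_eq_sum_range_succ (fun i j ↦ raney p r i * raney p s j)]
  exact sum_antidiagonal_mul p r n s

end raney

structure SatisfiesTriangulationRecurrence {R : Type*} [Semiring R] (a : ℕ → R) : Prop where
  zero : a 0 = 1
  odd : ∀ n, a (2 * n + 1) = ∑ i ∈ range (n + 1), a (2 * i) * a (2 * n - 2 * i)
  even : ∀ n, 1 ≤ n → a (2 * n) = ∑ i ∈ range (2 * n), a i * a (2 * n - 1 - i)

namespace SatisfiesTriangulationRecurrence

variable {R S : Type*} [Semiring R] [Semiring S]

theorem map {a : ℕ → R} (ha : SatisfiesTriangulationRecurrence a) (f : R →+* S) :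
    SatisfiesTriangulationRecurrence (f ∘ a) where
  zero := by simp [ha.zero]
  odd n := by simp [ha.odd n]
  even n hn := by simp [ha.even n hn]

theorem unique {a b : ℕ → R} (ha : SatisfiesTriangulationRecurrence a)
    (hb : SatisfiesTriangulationRecurrence b) : a = b := by
  funext m
  induction m using Nat.strong_induction_on with
  | _ m ih =>
    obtain ⟨n, rfl | rfl⟩ := Nat.even_or_odd' m
    · rcases n with _ | n
      · rw [ha.zero, hb.zero]
      · rw [ha.even _ n.succ_pos, hb.even _ n.succ_pos]
        refine sum_congr rfl fun i hi ↦ ?_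
        rw [mem_range] at hi
        rw [ih i (by omega), ih (2 * (n + 1) - 1 - i) (by omega)]
    · rw [ha.odd, hb.odd]
      refine sum_congr rfl fun i hi ↦ ?_
      rw [mem_range] at hi
      rw [ih (2 * i) (by omega), ih (2 * n - 2 * i) (by omega)]

end SatisfiesTriangulationRecurrence

theorem Finset.sum_range_two_mul {M : Type*} [AddCommMonoid M] (f : ℕ → M) (n : ℕ) :
    ∑ i ∈ range (2 * n), f i = ∑ j ∈ range n, (f (2 * j) + f (2 * j + 1)) := by
  induction n with
  | zero => simp
  | succ n ih =>
    rw [mul_add, mul_one, sum_range_succ, sum_range_succ, ih, sum_range_succ, add_assoc]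

def raneyInterleaved (m : ℕ) : ℚ := 2 ^ (m / 2) * raney 3 (m % 2 + 1) (m / 2)

@[simp]
theorem raneyInterleaved_two_mul (n : ℕ) : raneyInterleaved (2 * n) = 2 ^ n * raney 3 1 n := by
  simp [raneyInterleaved]

@[simp]
theorem raneyInterleaved_two_mul_add_one (n : ℕ) :
    raneyInterleaved (2 * n + 1) = 2 ^ n * raney 3 2 n := by
  simp [raneyInterleaved, Nat.add_mod, Nat.add_div]

theorem satisfiesTriangulationRecurrence_raneyInterleaved :
    SatisfiesTriangulationRecurrence raneyInterleaved where
  zero := by simp [raneyInterleaved]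
  odd n := by
    rw [raneyInterleaved_two_mul_add_one, ← raney.sum_range_mul 3 1 1, mul_sum]
    refine sum_congr rfl fun i hi ↦ ?_
    have hi : i ≤ n := Nat.lt_succ_iff.mp (mem_range.mp hi)
    rw [← mul_tsub, raneyInterleaved_two_mul, raneyInterleaved_two_mul, ← pow_mul_pow_sub 2 hi]
    ring
  even n hn := by
    obtain ⟨m, rfl⟩ : ∃ m, n = m + 1 := ⟨n - 1, by omega⟩
    rw [sum_range_two_mul, raneyInterleaved_two_mul, raney.succ_succ,
      raney.zero_left _ m.succ_ne_zero, zero_add]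
    have term : ∀ j ∈ range (m + 1),
        raneyInterleaved (2 * j) * raneyInterleaved (2 * (m + 1) - 1 - 2 * j) +
          raneyInterleaved (2 * j + 1) * raneyInterleaved (2 * (m + 1) - 1 - (2 * j + 1)) =
        2 ^ m * (raney 3 1 j * raney 3 2 (m - j)) + 2 ^ m * (raney 3 2 j * raney 3 1 (m - j)) := by
      intro j hj
      have hj : j ≤ m := Nat.lt_succ_iff.mp (mem_range.mp hj)
      rw [show 2 * (m + 1) - 1 - 2 * j = 2 * (m - j) + 1 by omega,
        show 2 * (m + 1) - 1 - (2 * j + 1) = 2 * (m - j) by omega, raneyInterleaved_two_mul,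
        raneyInterleaved_two_mul, raneyInterleaved_two_mul_add_one,
        raneyInterleaved_two_mul_add_one, ← pow_mul_pow_sub 2 hj]
      ring
    rw [sum_congr rfl term, sum_add_distrib, ← mul_sum, ← mul_sum, raney.sum_range_mul,
      raney.sum_range_mul]
    ring

theorem stmt0 (a : ℕ → ℕ) (h0 : a 0 = 1)
    (hodd : ∀ n : ℕ, a (2 * n + 1) = ∑ i ∈ Finset.range (n + 1), a (2 * i) * a (2 * n - 2 * i))
    (heven : ∀ n : ℕ, 1 ≤ n → a (2 * n) = ∑ i ∈ Finset.range (2 * n), a i * a (2 * n - 1 - i)) :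
    ∀ n : ℕ, 1 ≤ n → (a (2 * n) : ℚ) = 2 ^ n / (2 * n + 1) * Nat.choose (3 * n) n := by
  intro n _
  have ha : SatisfiesTriangulationRecurrence a := ⟨h0, hodd, heven⟩
  have hcast : (fun m ↦ (a m : ℚ)) = raneyInterleaved :=
    (ha.map (Nat.castRingHom ℚ)).unique satisfiesTriangulationRecurrence_raneyInterleaved
  rw [congrFun hcast (2 * n), raneyInterleaved_two_mul, raney.succ_one 2]
  push_cast
  ring
end

section
/- For all natural numbers n, d ≥ 1, and k ≥ 2, the (k,d)-Catalan number C_{n,k,d} = (d/((k-1)n+d))·C(kn+d-1, n) is a nonnegative integer. -/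
/-- The (k,d)-Catalan number `C_{n,k,d} = (d/((k-1)n+d))·binom(kn+d-1, n)`, as a rational. -/
def kdCatalan (n k d : ℕ) : ℚ :=
  ((d : ℚ) / ((k - 1 : ℚ) * n + d)) * Nat.choose (k * n + d - 1) n

theorem stmt3 (n k d : ℕ) (hd : 1 ≤ d) (hk : 2 ≤ k) :
    ∃ m : ℕ, (m : ℚ) = kdCatalan n k d := by
  unfold kdCatalan
  have hk1 : 1 ≤ k := by omega
  obtain _ | j := n
  · refine ⟨1, ?_⟩
    have hd' : (0:ℚ) < (d:ℚ) := by exact_mod_cast hd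
    simp
    field_simp
  · set n := j + 1 with hn
    set t := (k - 1) * n with ht
    have hkn : k * n = t + n := by
      rw [ht]
      have : (k - 1) * n + 1 * n = k * n := by
        rw [← Nat.add_mul]; congr 1; omega
      omega
    have hN : k * n + d - 1 = t + n + d - 1 := by rw [hkn]
    have hNj : (t + n + d - 1) - j = t + d := by omega
    set N := t + n + d - 1 with hNdef
    set A := N.choose n with hA
    set B := N.choose j with hB
    have hid : A * (j + 1) = B * (t + d) := by
      have := Nat.choose_succ_right_eq N j
      rw [← hNj]; exact this
    have hle : (k - 1) * B ≤ A := by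
      have h1 : ((k - 1) * B) * (t + d) ≤ A * (t + d) := by
          calc ((k - 1) * B) * (t + d) = (k - 1) * (B * (t + d)) := by ring
        _ = (k - 1) * (A * (j + 1)) := by rw [hid]
        _ = A * t := by rw [ht, hn]; ring
        _ ≤ A * (t + d) := Nat.mul_le_mul_left _ (by omega)
      exact Nat.le_of_mul_le_mul_right h1 (by omega)
    refine ⟨A - (k - 1) * B, ?_⟩
    rw [hN]
    have hcast : ((A - (k - 1) * B : ℕ) : ℚ) = (A : ℚ) - ((k-1:ℕ) : ℚ) * B := by
      push_cast [Nat.cast_sub hle]; ring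
    rw [hcast]
    have hidQ : (A : ℚ) * (j + 1) = (B : ℚ) * ((t:ℚ) + d) := by exact_mod_cast hid
    have hkQ : ((k - 1 : ℕ) : ℚ) = (k : ℚ) - 1 := by
      push_cast [Nat.cast_sub hk1]; ring
    have htQ : (t : ℚ) = ((k:ℚ) - 1) * n := by
      rw [ht]; push_cast [Nat.cast_sub hk1]; ring
    have hden : ((k:ℚ) - 1) * (n:ℕ) + d ≠ 0 := by
      rw [← htQ]
      have : (0:ℚ) < (t:ℚ) + d := by
        have : 0 < t + d := by omega
        exact_mod_cast this
      positivity
    rw [div_mul_eq_mul_div, eq_div_iff hden]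
    have hnQ : ((n:ℕ) : ℚ) = (j : ℚ) + 1 := by push_cast [hn]; ring
    rw [hkQ]
    linear_combination ((k:ℚ)-1) * hidQ + ((k:ℚ)-1)*(A:ℚ) * hnQ + ((k:ℚ)-1)*(B:ℚ) * htQ
end

section
/- Let A_0(x) and A_1(x) be formal power series with A_0 = 2x(1+A_0)·A_1 and A_1 = (1+A_0)^2. Then A_0 = 2x(1+A_0)^3, and for n ≥ 1 the coefficient of x^n in A_0 is (2^n/n)·C(3n, n-1). -/
/-!
Put `B = 1 + A₀`, so that `B = 1 + 2XB³`, and let `θ = X d/dX`. Applying `θ` to the equation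
gives `(3 - 2B) θB = B(B - 1)`; applying it once more and eliminating `X`, `θB` and `θ²B` shows
that `B` satisfies the linear equation `θ(2θ + 1)B = 3X(3θ + 1)(3θ + 2)B`. On coefficients this is
the recurrence `(n + 1)(2n + 3) bₙ₊₁ = 3(3n + 1)(3n + 2) bₙ`, whose solution with `b₀ = 1` is
`bₙ = 2ⁿ C(3n, n) / (2n + 1) = (2ⁿ / n) C(3n, n - 1)`.
-/

open PowerSeries

theorem Derivation.map_ofNat {R A M : Type*} [CommSemiring R] [CommSemiring A] [Algebra R A]
    [AddCommMonoid M] [Module A M] [Module R M] (D : Derivation R A M) (n : ℕ) [n.AtLeastTwo] :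
    D ofNat(n) = 0 :=
  D.map_natCast n

theorem Nat.choose_three_mul_add_three_succ_mul (n : ℕ) :
    (3 * n + 3).choose (n + 1) * (2 * (n + 1) * (2 * n + 1)) =
      3 * (3 * n + 1) * (3 * n + 2) * (3 * n).choose n := by
  have h1 := Nat.add_one_mul_choose_eq (3 * n + 2) n
  have h2 := Nat.choose_mul_succ_eq (3 * n + 1) n
  have h3 := Nat.choose_mul_succ_eq (3 * n) n
  rw [show 3 * n + 1 + 1 - n = 2 * n + 2 by omega] at h2
  rw [show 3 * n + 1 - n = 2 * n + 1 by omega] at h3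
  linear_combination 2 * (2 * n + 1) * h1.symm + 3 * (2 * n + 1) * h2.symm +
    3 * (3 * n + 2) * h3.symm

namespace PowerSeries

variable (R : Type*) [CommRing R]

noncomputable def eulerOperator : Derivation R R⟦X⟧ R⟦X⟧ := (X : R⟦X⟧) • d⁄dX R

variable {R}

theorem eulerOperator_apply (f : R⟦X⟧) : eulerOperator R f = X * d⁄dX R f := rfl

@[simp] theorem eulerOperator_X : eulerOperator R X = X := by
  simp [eulerOperator_apply]

theorem coeff_eulerOperator (f : R⟦X⟧) (n : ℕ) :
    coeff n (eulerOperator R f) = n * coeff n f := by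
  rcases n with _ | n
  · simp [eulerOperator_apply]
  · rw [eulerOperator_apply, coeff_succ_X_mul, coeff_derivative, mul_comm, Nat.cast_succ]

theorem coeff_ofNat_mul (f : R⟦X⟧) (k n : ℕ) [k.AtLeastTwo] :
    coeff n (ofNat(k) * f) = ofNat(k) * coeff n f := by
  rw [← map_ofNat C, coeff_C_mul]

theorem eulerOperator_eq_of_eq_one_add_two_X_mul_pow_three {B : R⟦X⟧}
    (hB : B = 1 + 2 * X * B ^ 3) :
    (3 - 2 * B) * eulerOperator R B = B * (B - 1) := by
  have hθB := congrArg (eulerOperator R) hB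
  simp only [Derivation.leibniz, Derivation.leibniz_pow, smul_eq_mul, map_add, eulerOperator_X,
    Derivation.map_ofNat, Derivation.map_one_eq_zero] at hθB
  linear_combination B * hθB - (B + 3 * eulerOperator R B) * hB

theorem eulerOperator_ode_of_eq_one_add_two_X_mul_pow_three {R : Type*} [CommRing R] [IsDomain R]
    [NeZero (2 : R)] {B : R⟦X⟧} (hB : B = 1 + 2 * X * B ^ 3) :
    2 * eulerOperator R (eulerOperator R B) + eulerOperator R B =
      3 * X * (9 * eulerOperator R (eulerOperator R B) + 9 * eulerOperator R B + 2 * B) := by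
  set u := eulerOperator R B
  set v := eulerOperator R u
  have hu : (3 - 2 * B) * u = B * (B - 1) := eulerOperator_eq_of_eq_one_add_two_X_mul_pow_three hB
  have hv : (3 - 2 * B) * v - 2 * u ^ 2 = (2 * B - 1) * u := by
    have := congrArg (eulerOperator R) hu
    simp only [Derivation.leibniz, smul_eq_mul, map_sub, Derivation.map_ofNat,
      Derivation.map_one_eq_zero] at this
    linear_combination this
  have hB0 : constantCoeff B = 1 := by
    rw [hB]
    simp
  have hfactor : (2 * B ^ 3 * (3 - 2 * B) ^ 3 : R⟦X⟧) ≠ 0 := fun h => by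
    have := congrArg constantCoeff h
    norm_num [hB0, map_ofNat] at this
    exact two_ne_zero this
  refine (mul_right_inj' hfactor).mp ?_
  -- `2B³` turns `X` into `B - 1`; each factor `3 - 2B` removes one occurrence of `u` or `v`.
  linear_combination (3 * (3 - 2 * B) ^ 3 * (9 * v + 9 * u + 2 * B)) * hB +
    ((4 * B ^ 3 - 27 * B + 27) * (3 - 2 * B) ^ 2) * hv +
    ((4 * B ^ 3 - 27 * B + 27) * (2 * ((3 - 2 * B) * u + B * (B - 1)) + (2 * B - 1) * (3 - 2 * B)) +
      (3 - 2 * B) ^ 2 * (2 * B ^ 3 - 27 * B + 27)) * hu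

theorem coeff_recurrence_of_eulerOperator_ode {B : R⟦X⟧}
    (h : 2 * eulerOperator R (eulerOperator R B) + eulerOperator R B =
      3 * X * (9 * eulerOperator R (eulerOperator R B) + 9 * eulerOperator R B + 2 * B))
    (n : ℕ) :
    ((n + 1) * (2 * n + 3) : R) * coeff (n + 1) B =
      3 * (3 * n + 1) * (3 * n + 2) * coeff n B := by
  have := congrArg (coeff (n + 1)) h
  rw [mul_comm 3 X, mul_assoc, coeff_succ_X_mul] at this
  simp only [map_add, coeff_ofNat_mul, coeff_eulerOperator] at this
  push_cast at this
  linear_combination this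

end PowerSeries

theorem eq_two_pow_mul_choose_div_of_recurrence {K : Type*} [Field K] [CharZero K] {a : ℕ → K}
    (h0 : a 0 = 1)
    (h : ∀ n : ℕ, ((n + 1) * (2 * n + 3) : K) * a (n + 1) = 3 * (3 * n + 1) * (3 * n + 2) * a n)
    (n : ℕ) :
    a n = 2 ^ n * (3 * n).choose n / (2 * n + 1) := by
  induction n with
  | zero => simp [h0]
  | succ n ih =>
    have hchoose : ((3 * n + 3).choose (n + 1) * (2 * (n + 1) * (2 * n + 1)) : K) =
        3 * (3 * n + 1) * (3 * n + 2) * (3 * n).choose n := by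
      exact_mod_cast Nat.choose_three_mul_add_three_succ_mul n
    have hodd (k : ℕ) : (2 * k + 1 : K) ≠ 0 := by exact_mod_cast (2 * k).succ_ne_zero
    rw [eq_div_iff (hodd n)] at ih
    rw [eq_div_iff (hodd (n + 1)), show 3 * (n + 1) = 3 * n + 3 by ring]
    refine mul_left_cancel₀ (mul_ne_zero (Nat.cast_add_one_ne_zero n) (hodd n)) ?_
    push_cast
    linear_combination (2 * n + 1 : K) * h n + 3 * (3 * n + 1) * (3 * n + 2) * ih - 2 ^ n * hchoose

theorem stmt7_general (A₀ A₁ : PowerSeries ℚ)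
    (h1 : A₀ = 2 * X * (1 + A₀) * A₁) (h2 : A₁ = (1 + A₀) ^ 2) :
    A₀ = 2 * X * (1 + A₀) ^ 3 ∧
      ∀ n : ℕ, 1 ≤ n →
        coeff n A₀ = 2 ^ n / (n : ℚ) * Nat.choose (3 * n) (n - 1) := by
  have hA : A₀ = 2 * X * (1 + A₀) ^ 3 := by linear_combination h1 + 2 * X * (1 + A₀) * h2
  refine ⟨hA, fun n hn => ?_⟩
  obtain ⟨m, rfl⟩ : ∃ m, n = m + 1 := ⟨n - 1, by omega⟩
  have hB : 1 + A₀ = 1 + 2 * X * (1 + A₀) ^ 3 := by rw [← hA]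
  have hB0 : coeff 0 (1 + A₀) = 1 := by rw [hB]; simp
  have hcoeff := eq_two_pow_mul_choose_div_of_recurrence (a := fun k => coeff k (1 + A₀)) hB0
    (coeff_recurrence_of_eulerOperator_ode
      (eulerOperator_ode_of_eq_one_add_two_X_mul_pow_three hB)) (m + 1)
  rw [map_add, coeff_one, if_neg m.succ_ne_zero, zero_add] at hcoeff
  have hchoose : ((3 * m + 3).choose (m + 1) * (m + 1) : ℚ) =
      (3 * m + 3).choose m * (2 * m + 3) := by
    have := Nat.choose_succ_right_eq (3 * m + 3) m
    rw [show 3 * m + 3 - m = 2 * m + 3 by omega] at this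
    exact_mod_cast this
  rw [hcoeff, show 3 * (m + 1) = 3 * m + 3 by ring, Nat.add_sub_cancel]
  field_simp
  push_cast
  linear_combination hchoose

theorem stmt7 (A₀ A₁ : PowerSeries ℚ) (hc : constantCoeff A₀ = 0)
    (h1 : A₀ = 2 * X * (1 + A₀) * A₁) (h2 : A₁ = (1 + A₀) ^ 2) :
    A₀ = 2 * X * (1 + A₀) ^ 3 ∧
      ∀ n : ℕ, 1 ≤ n →
        coeff n A₀ = 2 ^ n / (n : ℚ) * Nat.choose (3 * n) (n - 1) :=
  stmt7_general A₀ A₁ h1 h2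
end

section
/- Let A_0(x) be a formal power series with zero constant term satisfying A_0 = 2x(1+A_0)^3, and let A_1 = (1+A_0)^2. Then for n ≥ 1, the coefficient of x^n in A_1 equals (2^{n+1}/n)·C(3n+1, n-1). -/
/-!
Put `U = 1 + A₀`, so that `U = 1 + 2 X U³`. Then `U ^ (k + 1) = U ^ k + 2 X U ^ (k + 3)`, which
determines the coefficients of all powers of `U` by induction on the degree, and the Raney numbers
`k / (3n + k) * C(3n + k, n)` satisfy the same recursion (Pascal's rule plus one absorption
identity). The same argument works for `U = 1 + a X U ^ d` with any `a` and `d`.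
-/

open PowerSeries

-- The case `n = 0` is separate since the closed form is the junk value `0 / 0 * 1` at `n = r = 0`.
noncomputable def raneyNumber (p r : ℕ) : ℕ → ℚ
  | 0 => 1
  | n + 1 => r / (p * (n + 1) + r : ℕ) * (p * (n + 1) + r).choose (n + 1)

theorem raneyNumber_one (p r : ℕ) : raneyNumber p r 1 = r := by
  rcases Nat.eq_zero_or_pos (p + r) with h | h
  · simp [raneyNumber, show r = 0 by omega]
  · have : (p + r : ℚ) ≠ 0 := by exact_mod_cast h.ne'
    simp [raneyNumber]
    field_simp

theorem raneyNumber_succ_succ (p r n : ℕ) :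
    raneyNumber p (r + 1) (n + 2) = raneyNumber p r (n + 2) + raneyNumber p (r + p) (n + 1) := by
  obtain ⟨M, hM⟩ : ∃ M, p * (n + 2) + r = M := ⟨_, rfl⟩
  have hMq : (p : ℚ) * (n + 2) + r = M := by exact_mod_cast hM
  simp only [raneyNumber]
  rw [show p * (n + 1 + 1) + (r + 1) = M + 1 by rw [← hM]; ring, show p * (n + 1 + 1) + r = M from hM,
    show p * (n + 1) + (r + p) = M by rw [← hM]; ring]
  rcases Nat.eq_zero_or_pos M with rfl | hM0
  · simp [Nat.choose_eq_zero_of_lt]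
  have pascal : ((M + 1).choose (n + 2) : ℚ) = M.choose (n + 1) + M.choose (n + 2) := by
    exact_mod_cast Nat.choose_succ_succ' M (n + 1)
  have absorb : ((M : ℚ) + 1) * M.choose (n + 1) = (M + 1).choose (n + 2) * (n + 2) := by
    exact_mod_cast Nat.add_one_mul_choose_eq M (n + 1)
  have hM' : (M : ℚ) ≠ 0 := by exact_mod_cast hM0.ne'
  push_cast
  field_simp
  linear_combination ((M : ℚ) + 1) * r * pascal - p * absorb - ((M + 1).choose (n + 2) : ℚ) * hMq

theorem raneyNumber_succ_succ_eq_div_mul_choose (p r n : ℕ) :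
    raneyNumber p (r + 1) (n + 1) = (r + 1) / (n + 1) * (p * (n + 1) + r).choose n := by
  have absorb : ((p * (n + 1) + r + 1).choose (n + 1) : ℚ)
      = (p * (n + 1) + r + 1) * (p * (n + 1) + r).choose n / (n + 1) := by
    rw [eq_div_iff (by positivity)]
    exact_mod_cast (Nat.add_one_mul_choose_eq (p * (n + 1) + r) n).symm
  simp only [raneyNumber]
  rw [show p * (n + 1) + (r + 1) = p * (n + 1) + r + 1 by ring, absorb]
  push_cast
  field_simp

theorem coeff_succ_C_mul_X_mul {R : Type*} [Semiring R] (a : R) (n : ℕ) (φ : R⟦X⟧) :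
    coeff (n + 1) (C a * X * φ) = a * coeff n φ := by
  rw [mul_assoc, coeff_C_mul, coeff_succ_X_mul]

theorem pow_succ_of_eq_one_add_mul_pow {R : Type*} [CommRing R] {U : R⟦X⟧} {a : R} {d : ℕ}
    (hU : U = 1 + C a * X * U ^ d) (k : ℕ) : U ^ (k + 1) = U ^ k + C a * X * U ^ (k + d) := by
  linear_combination U ^ k * hU

theorem coeff_pow_of_eq_one_add_mul_pow {K : Type*} [Field K] [CharZero K] {U : K⟦X⟧} {a : K}
    {d : ℕ} (hU : U = 1 + C a * X * U ^ d) (n k : ℕ) :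
    coeff n (U ^ k) = a ^ n * raneyNumber d k n := by
  induction n generalizing k with
  | zero =>
    have hU0 : constantCoeff U = 1 := by
      rw [hU]
      simp
    simp [raneyNumber, hU0]
  | succ n ih =>
    induction k with
    | zero => simp [raneyNumber]
    | succ k ihk =>
      rw [pow_succ_of_eq_one_add_mul_pow hU, map_add, ihk, coeff_succ_C_mul_X_mul, ih]
      rcases n with _ | n
      · simp only [zero_add, raneyNumber_one]
        simp [raneyNumber]
        ring
      · push_cast [raneyNumber_succ_succ, add_comm k d]
        ring

theorem stmt8_general (A₀ : PowerSeries ℚ)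
    (h : A₀ = 2 * X * (1 + A₀) ^ 3) :
    ∀ n : ℕ, 1 ≤ n →
      coeff n ((1 + A₀) ^ 2) = 2 ^ (n + 1) / (n : ℚ) * Nat.choose (3 * n + 1) (n - 1) := by
  have hU : 1 + A₀ = 1 + C (2 : ℚ) * X * (1 + A₀) ^ 3 := by
    rw [map_ofNat]
    exact congrArg (1 + ·) h
  intro n hn
  obtain ⟨m, rfl⟩ : ∃ m, n = m + 1 := ⟨n - 1, by omega⟩
  rw [coeff_pow_of_eq_one_add_mul_pow hU, raneyNumber_succ_succ_eq_div_mul_choose, Nat.add_sub_cancel]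
  push_cast
  ring

theorem stmt8 (A₀ : PowerSeries ℚ) (hc : constantCoeff A₀ = 0)
    (h : A₀ = 2 * X * (1 + A₀) ^ 3) :
    ∀ n : ℕ, 1 ≤ n →
      coeff n ((1 + A₀) ^ 2) = 2 ^ (n + 1) / (n : ℚ) * Nat.choose (3 * n + 1) (n - 1) :=
  stmt8_general A₀ h
end

section
/- Let b_N satisfy b_0 = 1 and the recursion arising from splitting at the triangle containing the top edge in a 3-colored polygon (so that the generating functions B_0 = Σ_{n≥1} b_{3n}x^n, B_1 = Σ_{n≥0} b_{3n+1}x^n, B_2 = Σ_{n≥0} b_{3n+2}x^n satisfy the system forced by properness). Then b_{3n} = (1/(3n+1))·C(4n,n), i.e., b_{3n} equals the 4-Catalan number C_{n,4}. -/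
/-! `A = 1 + B₀` satisfies `A = 1 + X A⁴`. For the Euler derivation `θ = X d/dX`, applying `θ` to
this relation gives `θA (4 - 3A) = A (A - 1)`, and applying it twice more expresses `θ²A` and `θ³A`
rationally in `A`. Eliminating them yields the hypergeometric equation
`3θ(3θ - 1)(3θ + 1) A = 4X (4θ + 1)(4θ + 2)(4θ + 3) A`, whose coefficients give the recurrence
`3(n+1)(3n+2)(3n+4) aₙ₊₁ = 4(4n+1)(4n+2)(4n+3) aₙ`, also satisfied by `binom(4n, n)/(3n+1)`. -/

open PowerSeries

/-- The k-Catalan number `C_{n,k} = (1/((k-1)n+1))·binom(kn,n)`, as a rational number. -/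
def kCatalan (n k : ℕ) : ℚ := (1 / ((k - 1 : ℚ) * n + 1)) * Nat.choose (k * n) n

theorem fussCatalan_ode_of_relations {R : Type*} [CommRing R] [IsDomain R] {x a u v y : R}
    (ha : a ≠ 0) (hc : 4 - 3 * a ≠ 0) (hx : x * a ^ 4 = a - 1)
    (hu : u * (4 - 3 * a) = a * (a - 1))
    (hv : v * (4 - 3 * a) = (2 * a - 1) * u + 3 * u ^ 2)
    (hy : y * (4 - 3 * a) = (2 * a - 1) * v + 2 * u ^ 2 + 9 * u * v) :
    27 * y - 3 * u = 4 * x * (64 * y + 96 * v + 44 * u + 6 * a) := by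
  have hinj := IsFractionRing.injective R (FractionRing R)
  apply hinj
  apply_fun algebraMap R (FractionRing R) at hx hu hv hy
  replace ha := (map_ne_zero_iff _ hinj).2 ha
  replace hc := (map_ne_zero_iff _ hinj).2 hc
  simp only [map_mul, map_sub, map_add, map_pow, map_ofNat, map_one] at *
  generalize algebraMap R (FractionRing R) x = x, algebraMap R (FractionRing R) u = u,
    algebraMap R (FractionRing R) v = v, algebraMap R (FractionRing R) y = y at *
  generalize hcdef : 4 - 3 * algebraMap R (FractionRing R) a = c at *
  generalize algebraMap R (FractionRing R) a = a at *
  -- solving for `x`, `u`, `v`, `y` leaves an identity of rational functions in `a` and `c`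
  rw [← eq_div_iff (pow_ne_zero 4 ha)] at hx
  rw [← eq_div_iff hc] at hu hv hy
  subst hx hy hv hu
  field_simp
  rw [← hcdef]
  ring

section Derivation

variable {S R : Type*} [CommRing S] [CommRing R] [Algebra S R] (D : Derivation S R R)

theorem Derivation.apply_mul_four_sub_three_mul (u a : R) :
    D (u * (4 - 3 * a)) = D u * (4 - 3 * a) - 3 * u * D a := by
  have h4 : D (4 : R) = 0 := by exact_mod_cast D.map_natCast 4
  have h3 : D (3 : R) = 0 := by exact_mod_cast D.map_natCast 3
  simp only [Derivation.leibniz, Derivation.map_sub, h4, h3, smul_eq_mul]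
  ring

variable {D} {x a : R} (hx : D x = x) (ha : a = 1 + x * a ^ 4)
include hx ha

theorem Derivation.apply_mul_four_sub_three_mul_of_eq_one_add_mul_pow_four :
    D a * (4 - 3 * a) = a * (a - 1) := by
  have hDa : D a = x * a ^ 4 + 4 * x * a ^ 3 * D a := by
    conv_lhs => rw [ha]
    simp only [Derivation.map_add, Derivation.map_one_eq_zero, Derivation.leibniz,
      Derivation.leibniz_pow, hx, smul_eq_mul, nsmul_eq_mul]
    push_cast
    ring
  linear_combination a * hDa - (a + 4 * D a) * ha

theorem Derivation.ode_of_eq_one_add_mul_pow_four [IsDomain R] (ha₀ : a ≠ 0)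
    (hc : 4 - 3 * a ≠ 0) :
    27 * D (D (D a)) - 3 * D a =
      4 * x * (64 * D (D (D a)) + 96 * D (D a) + 44 * D a + 6 * a) := by
  have hu := D.apply_mul_four_sub_three_mul_of_eq_one_add_mul_pow_four hx ha
  have hv : D (D a) * (4 - 3 * a) = (2 * a - 1) * D a + 3 * D a ^ 2 := by
    have h := congrArg D hu
    rw [D.apply_mul_four_sub_three_mul, Derivation.leibniz, Derivation.map_sub,
      Derivation.map_one_eq_zero, smul_eq_mul, smul_eq_mul] at h
    linear_combination h
  have hy : D (D (D a)) * (4 - 3 * a) =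
      (2 * a - 1) * D (D a) + 2 * D a ^ 2 + 9 * D a * D (D a) := by
    have h := congrArg D hv
    have h2 : D (2 : R) = 0 := by exact_mod_cast D.map_natCast 2
    have h3 : D (3 : R) = 0 := by exact_mod_cast D.map_natCast 3
    rw [D.apply_mul_four_sub_three_mul] at h
    simp only [Derivation.leibniz, Derivation.leibniz_pow, Derivation.map_add, Derivation.map_sub,
      Derivation.map_one_eq_zero, h2, h3, smul_eq_mul, nsmul_eq_mul] at h
    push_cast at h
    linear_combination h
  exact fussCatalan_ode_of_relations ha₀ hc (by linear_combination -ha) hu hv hy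

end Derivation

theorem choose_four_mul_succ (n : ℕ) :
    (3 * n + 1) * (3 * n + 2) * (3 * n + 3) * (4 * (n + 1)).choose (n + 1) =
      4 * (4 * n + 1) * (4 * n + 2) * (4 * n + 3) * (4 * n).choose n := by
  have hsucc := Nat.choose_mul_factorial_mul_factorial (show n + 1 ≤ 4 * (n + 1) by omega)
  have h := Nat.choose_mul_factorial_mul_factorial (show n ≤ 4 * n by omega)
  rw [show 4 * (n + 1) - (n + 1) = 3 * n + 2 + 1 by omega,
    show 4 * (n + 1) = 4 * n + 3 + 1 by ring] at hsucc
  rw [show 4 * n - n = 3 * n by omega] at h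
  simp only [Nat.factorial_succ] at hsucc
  apply Nat.eq_of_mul_eq_mul_right (mul_pos (n + 1).factorial_pos (3 * n).factorial_pos)
  rw [show 4 * (n + 1) = 4 * n + 3 + 1 by ring, Nat.factorial_succ]
  linear_combination hsucc - (4 * n + 1) * (4 * n + 2) * (4 * n + 3) * (4 * n + 4) * h

section PowerSeries

variable {R : Type*} [CommRing R]

variable (R) in
noncomputable def eulerDerivation : Derivation R R⟦X⟧ R⟦X⟧ := (X : R⟦X⟧) • d⁄dX R

theorem coeff_eulerDerivation (f : R⟦X⟧) (n : ℕ) :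
    coeff n (eulerDerivation R f) = n * coeff n f := by
  rcases n with _ | n
  · simp [eulerDerivation]
  · rw [eulerDerivation, Derivation.smul_apply, smul_eq_mul, coeff_succ_X_mul, coeff_derivative]
    push_cast
    ring

theorem eulerDerivation_X : eulerDerivation R X = X := by
  simp [eulerDerivation]

theorem PowerSeries.coeff_ofNat_mul_s9 (f : R⟦X⟧) (m n : ℕ) [m.AtLeastTwo] :
    coeff n ((ofNat(m) : R⟦X⟧) * f) = ofNat(m) * coeff n f := by
  rw [← map_ofNat C, coeff_C_mul]

theorem constantCoeff_eq_one_of_eq_one_add_X_mul {A f : R⟦X⟧} (h : A = 1 + X * f) :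
    constantCoeff A = 1 := by
  rw [h]
  simp

variable {A : R⟦X⟧} (hA : A = 1 + X * A ^ 4)
include hA

theorem coeff_succ_of_eq_one_add_X_mul_pow_four [IsDomain R] (n : ℕ) :
    3 * (n + 1) * (3 * n + 2) * (3 * n + 4) * coeff (n + 1) A =
      4 * (4 * n + 1) * (4 * n + 2) * (4 * n + 3) * coeff n A := by
  have hA₁ := constantCoeff_eq_one_of_eq_one_add_X_mul hA
  have hA₀ : A ≠ 0 := fun h => by simp [h] at hA₁
  have hc : 4 - 3 * A ≠ 0 := by
    have : constantCoeff (4 - 3 * A) = 1 := by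
      rw [map_sub, map_mul, map_ofNat, map_ofNat, hA₁]
      norm_num
    exact fun h => by simp [h] at this
  have h := congrArg (coeff (n + 1))
    ((eulerDerivation R).ode_of_eq_one_add_mul_pow_four eulerDerivation_X hA hA₀ hc)
  simp only [map_sub, map_add, mul_add, mul_assoc, coeff_succ_X_mul, PowerSeries.coeff_ofNat_mul_s9,
    coeff_eulerDerivation] at h
  push_cast at h
  linear_combination h

end PowerSeries

theorem coeff_eq_of_eq_one_add_X_mul_pow_four {K : Type*} [Field K] [CharZero K] {A : K⟦X⟧}
    (hA : A = 1 + X * A ^ 4) (n : ℕ) :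
    coeff n A = 1 / (3 * n + 1) * (4 * n).choose n := by
  induction n with
  | zero => simpa using constantCoeff_eq_one_of_eq_one_add_X_mul hA
  | succ n ih =>
    have hrec := coeff_succ_of_eq_one_add_X_mul_pow_four hA n
    have hchoose : ((3 * n + 1) * (3 * n + 2) * (3 * n + 3) : K) * (4 * (n + 1)).choose (n + 1) =
        4 * (4 * n + 1) * (4 * n + 2) * (4 * n + 3) * (4 * n).choose n := by
      exact_mod_cast congrArg (Nat.cast (R := K)) (choose_four_mul_succ n)
    have h₁ : (3 * n + 1 : K) ≠ 0 := by norm_cast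
    have h₂ : (3 * n + 2 : K) ≠ 0 := by norm_cast
    have h₃ : (3 * n + 3 : K) ≠ 0 := by norm_cast
    rw [ih] at hrec
    field_simp at hrec
    push_cast
    rw [one_div_mul_eq_div, eq_div_iff (by norm_cast)]
    apply mul_left_cancel₀ (mul_ne_zero (mul_ne_zero h₁ h₂) h₃)
    linear_combination hrec - hchoose

theorem stmt9_general (b : ℕ → ℕ) (hb0 : b 0 = 1)
    (B₀ B₁ : PowerSeries ℚ)
    (hB₀ : ∀ n : ℕ, 1 ≤ n → coeff n B₀ = b (3 * n))
    -- the system of functional equations forced by properness of the triangulations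
    (h0 : B₀ = X * B₁ ^ 2) (h1 : B₁ = (1 + B₀) ^ 2) :
    ∀ n : ℕ, (b (3 * n) : ℚ) = 1 / (3 * (n : ℚ) + 1) * Nat.choose (4 * n) n ∧
      (b (3 * n) : ℚ) = kCatalan n 4 := by
  have hB₀' : B₀ = X * (1 + B₀) ^ 4 := by
    calc B₀ = X * B₁ ^ 2 := h0
      _ = X * (1 + B₀) ^ 4 := by rw [h1]; ring
  have hA : 1 + B₀ = 1 + X * (1 + B₀) ^ 4 := by rw [← hB₀']
  have hb : ∀ n : ℕ, (b (3 * n) : ℚ) = 1 / (3 * (n : ℚ) + 1) * Nat.choose (4 * n) n := by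
    rintro (_ | n)
    · simp [hb0]
    · rw [← coeff_eq_of_eq_one_add_X_mul_pow_four hA, map_add, coeff_one, hB₀ _ (by omega)]
      simp
  intro n
  refine ⟨hb n, ?_⟩
  rw [hb n, kCatalan]
  norm_num

theorem stmt9 (b : ℕ → ℕ) (hb0 : b 0 = 1)
    (B₀ B₁ B₂ : PowerSeries ℚ)
    (hB₀ : ∀ n : ℕ, 1 ≤ n → coeff n B₀ = b (3 * n)) (hB₀c : constantCoeff B₀ = 0)
    (hB₁ : ∀ n : ℕ, coeff n B₁ = b (3 * n + 1))
    (hB₂ : ∀ n : ℕ, coeff n B₂ = b (3 * n + 2))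
    -- the system of functional equations forced by properness of the triangulations
    (h0 : B₀ = X * B₁ ^ 2) (h1 : B₁ = (1 + B₀) ^ 2) (h2 : B₂ = (1 + B₀) ^ 3) :
    ∀ n : ℕ, (b (3 * n) : ℚ) = 1 / (3 * (n : ℚ) + 1) * Nat.choose (4 * n) n ∧
      (b (3 * n) : ℚ) = kCatalan n 4 :=
  stmt9_general b hb0 B₀ B₁ hB₀ h0 h1
end

section
/- Any two k-ary trees with n internal vertices are connected by a sequence of flips, where a flip at a vertex v with internal child x = v^{(i)} replaces x's role by another child position while preserving, in left-to-right order, the list of subtrees T_v', ..., T_v^{(i-1)}, T_x', ..., T_x^{(k)}, T_v^{(i+1)}, ..., T_v^{(k)}. -/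
/-- A `k`-ary tree: every vertex has exactly `k` children or none. -/
inductive KTree (k : ℕ) : Type
  | leaf : KTree k
  | node : (Fin k → KTree k) → KTree k

namespace KTree

/-- Number of internal vertices of a `k`-ary tree. -/
def internals {k : ℕ} : KTree k → ℕ
  | leaf => 0
  | node f => 1 + ∑ i : Fin k, (f i).internals

/-- Assemble a tree from a root `v` whose `i`-th child is internal: the
`2k-1` subtrees `s 0, s 1, …, s (2k-2)`, listed left to right in depth-first
order, hang off `v` and its `i`-th child `x`; namely the children of `v` are
`s 0, …, s (i-1)`, then `x`, then `s (i+k), …, s (2k-2)`, and the children of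
`x` are `s i, …, s (i+k-1)`. -/
def assemble {k : ℕ} (i : Fin k) (s : ℕ → KTree k) : KTree k :=
  node (fun j =>
    if (j : ℕ) < (i : ℕ) then s j
    else if (j : ℕ) = (i : ℕ) then node (fun m => s ((i : ℕ) + (m : ℕ)))
    else s ((j : ℕ) + k - 1))

/-- The flip relation: two trees are related by a flip if they agree everywhere
except at some vertex `v` with an internal child, where the position of the
internal child changes from `i` to `j` while the left-to-right list of the
`2k-1` subtrees hanging off `v` and that child is preserved. -/
inductive Flip {k : ℕ} : KTree k → KTree k → Prop
  | here (i j : Fin k) (s : ℕ → KTree k) : Flip (assemble i s) (assemble j s)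
  | congr (f g : Fin k → KTree k) (i : Fin k) :
      Flip (f i) (g i) → (∀ j, j ≠ i → f j = g j) → Flip (node f) (node g)

end KTree

/-!
Flips are symmetric, so it suffices to flip every tree into the left comb with the same number
of internal vertices. Flips preserve that number. At a root with an internal child other than the
first, flipping that child into the first position strictly enlarges the first subtree; once all
other children are leaves, the first subtree is flipped into a comb by induction on size.
-/

namespace KTree

open Relation

variable {k : ℕ}

theorem internals_assemble (i : Fin k) (s : ℕ → KTree k) :
    (assemble i s).internals = 2 + ∑ m ∈ Finset.range (2 * k - 1), (s m).internals := by
  have hi := i.isLt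
  let F : ℕ → ℕ := fun j =>
    (if j < i then s j else if j = i then node (fun m : Fin k => s (i + m)) else
      s (j + k - 1)).internals
  have hbefore : ∑ j ∈ Finset.range i, F j = ∑ j ∈ Finset.range i, (s j).internals :=
    Finset.sum_congr rfl fun j hj => by simp [F, Finset.mem_range.mp hj]
  have hat : F i = 1 + ∑ m ∈ Finset.Ico (i : ℕ) (i + k), (s m).internals := by
    simp [F, internals, Finset.sum_Ico_eq_sum_range,
      Fin.sum_univ_eq_sum_range (fun m => (s (i + m)).internals)]
  have hafter : ∑ j ∈ Finset.Ico (i + 1 : ℕ) k, F j =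
      ∑ m ∈ Finset.Ico (i + k : ℕ) (2 * k - 1), (s m).internals := by
    have hshift : ∀ j ∈ Finset.Ico (i + 1 : ℕ) k, F j = (s (j + (k - 1))).internals :=
      fun j hj => by
        obtain ⟨hj₁, -⟩ := Finset.mem_Ico.mp hj
        simp [F, show ¬ j < i by omega, show j ≠ i by omega,
          show j + k - 1 = j + (k - 1) by omega]
    rw [Finset.sum_congr rfl hshift, Finset.sum_Ico_add' (fun m => (s m).internals),
      show (i : ℕ) + 1 + (k - 1) = i + k by omega, show k + (k - 1) = 2 * k - 1 by omega]
  calc (assemble i s).internals = 1 + ∑ j ∈ Finset.range k, F j := by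
        simp only [assemble, internals]; rw [← Fin.sum_univ_eq_sum_range F k]
    _ = 2 + ∑ m ∈ Finset.range (2 * k - 1), (s m).internals := by
        rw [← Finset.sum_range_add_sum_Ico _ hi.le, Finset.sum_eq_sum_Ico_succ_bot hi, hbefore,
          hat, hafter, ← Finset.sum_range_add_sum_Ico _ (show (i : ℕ) ≤ 2 * k - 1 by omega),
          ← Finset.sum_Ico_consecutive _ (show (i : ℕ) ≤ i + k by omega)
            (show (i : ℕ) + k ≤ 2 * k - 1 by omega)]
        ring

theorem Flip.internals_eq {T T' : KTree k} (h : Flip T T') : T.internals = T'.internals := by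
  induction h with
  | here i j s => rw [internals_assemble, internals_assemble]
  | congr f g i _ hfg ih =>
    simp only [internals]
    congr 1
    refine Fintype.sum_congr _ _ fun j => ?_
    by_cases hj : j = i
    · exact hj ▸ ih
    · rw [hfg j hj]

theorem Flip.symm {T T' : KTree k} (h : Flip T T') : Flip T' T := by
  induction h with
  | here i j s => exact .here j i s
  | congr f g i _ hfg ih => exact .congr g f i ih fun j hj => (hfg j hj).symm

theorem reflTransGen_flip_symm {T T' : KTree k} (h : ReflTransGen Flip T T') :
    ReflTransGen Flip T' T := by
  induction h with
  | refl => rfl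
  | tail _ hflip ih => exact ih.head hflip.symm

theorem reflTransGen_node_update (f : Fin k → KTree k) (i : Fin k) {t : KTree k}
    (h : ReflTransGen Flip (f i) t) :
    ReflTransGen Flip (node f) (node (Function.update f i t)) := by
  have hlift : ReflTransGen Flip (node (Function.update f i (f i)))
      (node (Function.update f i t)) :=
    h.lift (fun t => node (Function.update f i t)) fun a b hab =>
      Flip.congr _ _ i (by simpa using hab) fun j hj => by simp [hj]
  rwa [Function.update_eq_self] at hlift

theorem reflTransGen_node {f g : Fin k → KTree k} (h : ∀ j, ReflTransGen Flip (f j) (g j)) :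
    ReflTransGen Flip (node f) (node g) := by
  classical
  suffices ∀ S : Finset (Fin k), ReflTransGen Flip (node f) (node (S.piecewise g f)) by
    simpa using this Finset.univ
  intro S
  induction S using Finset.induction_on with
  | empty => simpa using ReflTransGen.refl
  | insert i S hi ih =>
    rw [Finset.piecewise_insert]
    exact ih.trans (reflTransGen_node_update _ i (by simpa [hi] using h i))

theorem internals_child_lt (f : Fin k → KTree k) (j : Fin k) :
    (f j).internals < (node f).internals := by
  have := Finset.single_le_sum (fun j _ => Nat.zero_le (f j).internals) (Finset.mem_univ j)
  simp only [internals]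
  omega

open Fin.NatCast in
theorem exists_assemble_eq_node {f : Fin (k + 1) → KTree (k + 1)} {i : Fin (k + 1)}
    {g : Fin (k + 1) → KTree (k + 1)} (hfi : f i = node g) :
    ∃ s : ℕ → KTree (k + 1), assemble i s = node f ∧ ∀ j < i, s j = f j := by
  refine ⟨fun m => if m < i then f m else if m ≤ i + k then g (m - i : ℕ)
    else f (m - k : ℕ), ?_, fun j hj => by simp [hj]⟩
  simp only [assemble, node.injEq]
  funext j
  rcases lt_trichotomy (j : ℕ) i with hj | hj | hj
  · simp [hj]
  · simp only [Fin.ext hj, lt_irrefl, if_false, if_true, hfi, node.injEq]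
    funext m
    simp [m.is_le]
  · simp [show ¬ (j : ℕ) < i by omega, show (j : ℕ) ≠ i by omega,
      show ¬ (j : ℕ) + k < i by omega, not_le.mpr (Fin.lt_def.mpr hj)]

theorem exists_flip_first_child_internals_lt {f : Fin (k + 1) → KTree (k + 1)} {i : Fin (k + 1)}
    (hi : i ≠ 0) (hfi : f i ≠ leaf) :
    ∃ f', Flip (node f) (node f') ∧ (f 0).internals < (f' 0).internals := by
  obtain ⟨g, hg⟩ : ∃ g, f i = node g := by
    cases hf : f i with
    | leaf => exact absurd hf hfi
    | node g => exact ⟨g, rfl⟩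
  obtain ⟨s, hs, hs0⟩ := exists_assemble_eq_node hg
  refine ⟨_, hs ▸ Flip.here i 0 s, ?_⟩
  have hs00 : s 0 = f 0 := hs0 0 (Fin.pos_iff_ne_zero.mpr hi)
  simpa [hs00] using internals_child_lt (fun m => s m) 0

theorem eq_of_internals_eq_of_arity_zero {T T' : KTree 0} (h : T.internals = T'.internals) :
    T = T' := by
  cases T <;> cases T' <;> simp_all [internals, funext_iff]

variable (k) in
def leftComb : ℕ → KTree (k + 1)
  | 0 => leaf
  | n + 1 => node fun j => if j = 0 then leftComb n else leaf

theorem reflTransGen_node_leftComb {N : ℕ}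
    (ih : ∀ T : KTree (k + 1), T.internals = N → ReflTransGen Flip T (leftComb k N))
    {f : Fin (k + 1) → KTree (k + 1)} (hf : (node f).internals = N + 1) :
    ReflTransGen Flip (node f) (leftComb k (N + 1)) := by
  induction hd : N - (f 0).internals using Nat.strong_induction_on generalizing f with
  | _ d ihd =>
  by_cases hleaf : ∀ j ≠ 0, f j = leaf
  · have h0 : (f 0).internals = N := by
      have : (node f).internals = 1 + (f 0).internals := by
        simp only [internals]
        rw [Fintype.sum_eq_single 0 fun j hj => by simp [hleaf j hj, internals]]
      omega
    refine reflTransGen_node fun j => ?_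
    by_cases hj : j = 0
    · subst hj; simpa using ih _ h0
    · simpa [hj, hleaf j hj] using .refl
  · push Not at hleaf
    obtain ⟨i, hi, hfi⟩ := hleaf
    obtain ⟨f', hflip, hlt⟩ := exists_flip_first_child_internals_lt hi hfi
    have hf' : (node f').internals = N + 1 := hflip.internals_eq ▸ hf
    have hle := internals_child_lt f' 0
    exact .head hflip (ihd _ (by omega) hf' rfl)

theorem reflTransGen_leftComb (T : KTree (k + 1)) :
    ReflTransGen Flip T (leftComb k T.internals) := by
  suffices ∀ N (T : KTree (k + 1)), T.internals = N → ReflTransGen Flip T (leftComb k N) from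
    this _ T rfl
  intro N
  induction N with
  | zero =>
    rintro (_ | f) hT
    · rfl
    · simp [internals] at hT
  | succ N ih =>
    rintro (_ | f) hT
    · simp [internals] at hT
    · exact reflTransGen_node_leftComb ih hT

end KTree

theorem stmt16 (k : ℕ) (T T' : KTree k) (h : T.internals = T'.internals) :
    Relation.ReflTransGen KTree.Flip T T' := by
  cases k with
  | zero => exact KTree.eq_of_internals_eq_of_arity_zero h ▸ .refl
  | succ k =>
    exact (KTree.reflTransGen_leftComb T).trans
      (h ▸ KTree.reflTransGen_flip_symm (KTree.reflTransGen_leftComb T'))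
end

section
/- For all n ≥ 1, n divides 2^n·C(3n, n-1), and the quotient (2^n/n)·C(3n,n-1) equals (2^n/(2n+1))·C(3n,n). -/
/-! The ratio `C(3n, n) / C(3n, n - 1) = (2n + 1) / n` gives the identity, and since `n` is coprime
to `2n + 1`, it forces `n ∣ C(3n, n - 1)`. -/

theorem Nat.choose_pred_mul_sub_add_one {N n : ℕ} (hn : 1 ≤ n) (hnN : n ≤ N) :
    N.choose (n - 1) * (N - n + 1) = N.choose n * n := by
  obtain ⟨m, rfl⟩ : ∃ m, n = m + 1 := ⟨n - 1, by omega⟩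
  rw [Nat.add_sub_cancel, Nat.choose_succ_right_eq, show N - (m + 1) + 1 = N - m by omega]

theorem Nat.choose_three_mul_pred_mul {n : ℕ} (hn : 1 ≤ n) :
    (3 * n).choose (n - 1) * (2 * n + 1) = (3 * n).choose n * n := by
  rw [← Nat.choose_pred_mul_sub_add_one hn (by omega), show 3 * n - n + 1 = 2 * n + 1 by omega]

theorem Nat.coprime_self_two_mul_add_one (n : ℕ) : n.Coprime (2 * n + 1) := by
  simp [mul_comm]

theorem stmt18 (n : ℕ) (hn : 1 ≤ n) :
    n ∣ 2 ^ n * Nat.choose (3 * n) (n - 1) ∧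
    (2 ^ n / (n : ℚ)) * Nat.choose (3 * n) (n - 1)
      = (2 ^ n / (2 * (n : ℚ) + 1)) * Nat.choose (3 * n) n := by
  have key := Nat.choose_three_mul_pred_mul hn
  constructor
  · have hdvd : n ∣ (3 * n).choose (n - 1) * (2 * n + 1) := key ▸ dvd_mul_left n _
    exact ((Nat.coprime_self_two_mul_add_one n).dvd_of_dvd_mul_right hdvd).mul_left _
  · have keyQ : ((3 * n).choose (n - 1) : ℚ) * (2 * n + 1) = (3 * n).choose n * n := by
      exact_mod_cast key
    rw [div_mul_eq_mul_div, div_mul_eq_mul_div, div_eq_div_iff (by positivity) (by positivity)]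
    linear_combination 2 ^ n * keyQ
end
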